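/- For every sequence π of distinct keys, the total cost of insertion splaying π starting from the empty tree equals the cost of splaying the sequence π starting from the insertion tree BST(π). -/

import Mathlib

/-- Binary trees with keys at internal nodes. -/
inductive BT (α : Type) where
  | leaf : BT α
  | node : BT α → α → BT α → BT α
deriving DecidableEq

namespace BT

variable {α : Type} [LinearOrder α]

/-- The list of keys of a tree, in symmetric (inorder) order. -/
def keys : BT α → List α
  | leaf => []
  | node l v r => keys l ++ v :: keys r

/-- The number of nodes of a tree. -/
def size : BT α → ℕ
  | leaf => 0
  | node l _ r => size l + size r + 1

/-- The symmetric-order (binary search tree) property. -/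
def IsBST : BT α → Prop
  | leaf => True
  | node l v r => (∀ x ∈ l.keys, x < v) ∧ (∀ x ∈ r.keys, v < x) ∧ l.IsBST ∧ r.IsBST

/-- Preorder of a binary tree: root, then left subtree, then right subtree. -/
def preorder : BT α → List α
  | leaf => []
  | node l v r => v :: (preorder l ++ preorder r)

/-- Postorder of a binary tree: left subtree, right subtree, then root. -/
def postorder : BT α → List α
  | leaf => []
  | node l v r => postorder l ++ postorder r ++ [v]

/-- Reversed preorder: root, then right subtree, then left subtree
(the preorder of the mirror image). -/
def revPreorder : BT α → List α
  | leaf => []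
  | node l v r => v :: (revPreorder r ++ revPreorder l)

/-- Standard leaf insertion into a binary search tree. -/
def insertKey : BT α → α → BT α
  | leaf, x => node leaf x leaf
  | node l v r, x =>
    if x < v then node (insertKey l x) v r
    else if v < x then node l v (insertKey r x)
    else node l v r

/-- The depth (number of edges from the root) of the node with key `x`,
located by binary search. -/
def depthOf : BT α → α → ℕ
  | leaf, _ => 0
  | node l v r, x =>
    if x < v then depthOf l x + 1
    else if v < x then depthOf r x + 1
    else 0

/-- The search path to the key `x`: `false` records a step to a left child,
`true` a step to a right child. -/
def pathTo : BT α → α → List Bool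
  | leaf, _ => []
  | node l v r, x =>
    if x < v then false :: pathTo l x
    else if v < x then true :: pathTo r x
    else []

/-- The left-depth of the node with key `x`: the number of left-child edges
on the path from the root to it. -/
def leftDepthKey : BT α → α → ℕ
  | leaf, _ => 0
  | node l v r, x =>
    if x < v then leftDepthKey l x + 1
    else if v < x then leftDepthKey r x
    else 0

/-- The subtree rooted at the node with key `x` (empty if `x` is absent). -/
def subtreeAt : BT α → α → BT α
  | leaf, _ => leaf
  | node l v r, x =>
    if x < v then subtreeAt l x
    else if v < x then subtreeAt r x
    else node l v r

/-- The key at the root, if any. -/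
def rootKey : BT α → Option α
  | leaf => none
  | node _ v _ => some v

/-- The key of the parent of the node with key `x`, if any. -/
def parentKey : BT α → α → Option α
  | leaf, _ => none
  | node l v r, x =>
    if x < v then (if l.rootKey = some x then some v else l.parentKey x)
    else if v < x then (if r.rootKey = some x then some v else r.parentKey x)
    else none

/-- A step of the context (zipper) describing the search path from the root
to the current subtree: `inL v r` means the current subtree is the left child
of a node with key `v` and right subtree `r`; `inR l v` means it is the right
child of a node with key `v` and left subtree `l`. -/
inductive Ctx (α : Type) where
  | inL : α → BT α → Ctx α
  | inR : BT α → α → Ctx α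

/-- Descend along the search path for `x`, recording the context.
The head of the returned list corresponds to the immediate parent. -/
def descend : BT α → α → List (Ctx α) → List (Ctx α) × BT α
  | leaf, _, acc => (acc, leaf)
  | node l v r, x, acc =>
    if x < v then descend l x (Ctx.inL v r :: acc)
    else if v < x then descend r x (Ctx.inR l v :: acc)
    else (acc, node l v r)

/-- Reattach a subtree into its context, with no rotations. -/
def rebuild : BT α → List (Ctx α) → BT α
  | t, [] => t
  | t, Ctx.inL v r :: cs => rebuild (node t v r) cs
  | t, Ctx.inR l v :: cs => rebuild (node l v t) cs

/-- Bottom-up splay steps: repeatedly apply zig / zig-zig / zig-zag steps to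
the current subtree (rooted at the node being splayed) until the context is
exhausted. -/
def splayLoop : BT α → List (Ctx α) → BT α
  | t, [] => t
  | node a x b, [Ctx.inL v r] => node a x (node b v r)          -- zig
  | node a x b, [Ctx.inR l v] => node (node l v a) x b          -- zig
  | node a x b, Ctx.inL p pr :: Ctx.inL g gr :: cs =>           -- zig-zig
      splayLoop (node a x (node b p (node pr g gr))) cs
  | node a x b, Ctx.inL p pr :: Ctx.inR gl g :: cs =>           -- zig-zag
      splayLoop (node (node gl g a) x (node b p pr)) cs
  | node a x b, Ctx.inR pl p :: Ctx.inR gl g :: cs =>           -- zig-zig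
      splayLoop (node (node (node gl g pl) p a) x b) cs
  | node a x b, Ctx.inR pl p :: Ctx.inL g gr :: cs =>           -- zig-zag
      splayLoop (node (node pl p a) x (node b g gr)) cs
  | leaf, cs => rebuild leaf cs   -- unreachable when the splayed key is present

/-- Splaying the key `x`: if `x` occurs in the tree, bring its node to the
root by bottom-up splay steps; otherwise leave the tree unchanged. -/
def splay (x : α) (t : BT α) : BT α :=
  match descend t x [] with
  | (_, leaf) => t
  | (cs, found) => splayLoop found cs

/-- `α`-weight-balance in the sense of Nievergelt–Reingold:
at each node, `min(|L|,|R|) + 1 ≥ α * (|x| + 1)`. -/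
def WeightBalanced (a : ℝ) : BT α → Prop
  | leaf => True
  | node l _ r =>
      (min l.size r.size + 1 : ℝ) ≥ a * ((l.size + r.size + 1 : ℕ) + 1 : ℝ) ∧
      WeightBalanced a l ∧ WeightBalanced a r

/-- The rank of `x` in `t`: the number of keys of `t` that are `≤ x`. -/
def rank (t : BT α) (x : α) : ℕ := (t.keys.filter (fun y => y ≤ x)).length

end BT

section Defs

variable {α : Type} [LinearOrder α]

/-- The insertion tree of a sequence: leaf-insert the keys in order. -/
def bstOf (π : List α) : BT α := π.foldl BT.insertKey BT.leaf

/-- `q` is a sub-root: a node of `t` not yet touched whose parent is touched,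
where `touched` is the list of touched keys. -/
def IsSubRoot (t : BT α) (touched : List α) (q : α) : Prop :=
  q ∈ t.keys ∧ q ∉ touched ∧ ∃ p, t.parentKey q = some p ∧ p ∈ touched

/-- π avoids the pattern (2,3,1). -/
def Avoids231 (π : List α) : Prop :=
  ¬ ∃ i j k : Fin π.length, i < j ∧ j < k ∧ π.get k < π.get i ∧ π.get i < π.get j

/-- π avoids the pattern (3,1,2). -/
def Avoids312 (π : List α) : Prop :=
  ¬ ∃ i j k : Fin π.length, i < j ∧ j < k ∧ π.get j < π.get k ∧ π.get k < π.get i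

/-- π avoids the pattern (2,1,3). -/
def Avoids213 (π : List α) : Prop :=
  ¬ ∃ i j k : Fin π.length, i < j ∧ j < k ∧ π.get j < π.get i ∧ π.get i < π.get k

/-- π contains a strictly decreasing subsequence of length `k`. -/
def HasDecreasingSubseq (π : List α) (k : ℕ) : Prop :=
  ∃ s : List α, s.Sublist π ∧ s.length = k ∧ s.Chain' (· > ·)

/-- Splay the keys of a list in order, starting from `t`. -/
def splaySeq (π : List α) (t : BT α) : BT α := π.foldl (fun s x => BT.splay x s) t

/-- The cost of splaying a sequence of keys starting from `t`:
each splay costs the current depth of the requested key plus one. -/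
def splayCost : BT α → List α → ℕ
  | _, [] => 0
  | t, x :: xs => (t.depthOf x + 1) + splayCost (BT.splay x t) xs

/-- The cost of insertion splaying a sequence of keys starting from `t`:
each key is leaf-inserted, then the new node is splayed, at a cost of
its depth after insertion plus one. -/
def insertSplayCost : BT α → List α → ℕ
  | _, [] => 0
  | t, x :: xs =>
    ((t.insertKey x).depthOf x + 1) + insertSplayCost (BT.splay x (t.insertKey x)) xs

/-- `DF rk xs` = Σ_{i≥2} log₂(|rk(x_i) − rk(x_{i−1})| + 1). -/
noncomputable def DF (rk : α → ℕ) (xs : List α) : ℝ :=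
  ((xs.zip xs.tail).map
    (fun p => Real.logb 2 (|(rk p.2 : ℝ) - (rk p.1 : ℝ)| + 1))).sum

/-- The rank of `x` within the sequence `σ` itself. -/
def rankIn (σ : List α) (x : α) : ℕ := (σ.filter (fun y => y ≤ x)).length

/-- The dynamic-finger sum of a sequence, with ranks computed in the
sequence itself. -/
noncomputable def DFseq (σ : List α) : ℝ := DF (rankIn σ) σ

end Defs

/-! Splaying a key `x` of a binary search tree commutes with leaf insertion of any key `y`.
Write the tree as a zipper `rebuild t cs` whose hole `t` is rooted at `x`. The search for `y`
either ends inside `t` or leaves the spine `cs` into one of its hanging subtrees, and a zig,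
zig-zig or zig-zag step only rearranges the spine keys and the hanging subtrees without changing
their symmetric order, so the search for `y` ends in the same subtree before and after the step.
Insertion does not move `x` either. So in `bstOf π` the insertions of the later keys can be pushed
past each splay, and the two costs agree term by term. -/

namespace BT

section Zipper

variable {α : Type}

def Ctx.key : Ctx α → α
  | .inL v _ => v
  | .inR _ v => v

def Ctx.plug (t : BT α) : Ctx α → BT α
  | .inL v r => node t v r
  | .inR l v => node l v t

theorem Ctx.key_mem_keys_plug (t : BT α) (c : Ctx α) : c.key ∈ (c.plug t).keys := by
  cases c <;> simp [key, plug, keys]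

theorem rebuild_cons (t : BT α) (c : Ctx α) (cs : List (Ctx α)) :
    rebuild t (c :: cs) = rebuild (c.plug t) cs := by
  cases c <;> rfl

theorem rebuild_append (t : BT α) (cs cs' : List (Ctx α)) :
    rebuild t (cs ++ cs') = rebuild (rebuild t cs) cs' := by
  induction cs generalizing t with
  | nil => rfl
  | cons c cs ih => simp only [List.cons_append, rebuild_cons, ih]

theorem keys_rebuild_congr {t t' : BT α} (h : t.keys = t'.keys) (cs : List (Ctx α)) :
    (rebuild t cs).keys = (rebuild t' cs).keys := by
  induction cs generalizing t t' with
  | nil => exact h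
  | cons c cs ih =>
    simp only [rebuild_cons]
    exact ih (by cases c <;> simp [Ctx.plug, keys, h])

theorem eq_node_of_rootKey {t : BT α} {x : α} (ht : t.rootKey = some x) :
    ∃ a b, t = node a x b := by
  cases t with
  | leaf => cases ht
  | node a v b => cases ht; exact ⟨a, b, rfl⟩

theorem mem_keys_of_rootKey {t : BT α} {x : α} (ht : t.rootKey = some x) : x ∈ t.keys := by
  obtain ⟨a, b, rfl⟩ := eq_node_of_rootKey ht
  simp [keys]

theorem splayLoop_nil (t : BT α) : splayLoop t [] = t := by
  cases t <;> rfl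

theorem splayLoop_cons_cons {t : BT α} {x : α} (ht : t.rootKey = some x) (c₁ c₂ : Ctx α)
    (cs : List (Ctx α)) :
    splayLoop t (c₁ :: c₂ :: cs) = splayLoop (splayLoop t [c₁, c₂]) cs := by
  obtain ⟨a, b, rfl⟩ := eq_node_of_rootKey ht
  cases c₁ <;> cases c₂ <;> rfl

theorem rootKey_splayLoop_pair {t : BT α} {x : α} (ht : t.rootKey = some x) (c₁ c₂ : Ctx α) :
    (splayLoop t [c₁, c₂]).rootKey = some x := by
  obtain ⟨a, b, rfl⟩ := eq_node_of_rootKey ht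
  cases c₁ <;> cases c₂ <;> rfl

theorem keys_splayLoop : ∀ (t : BT α) (cs : List (Ctx α)),
    (splayLoop t cs).keys = (rebuild t cs).keys
  | leaf, [] | node _ _ _, [] => rfl
  | leaf, _ :: _ => by simp [splayLoop]
  | node a x b, [c] => by cases c <;> simp [splayLoop, rebuild, keys]
  | node a x b, c₁ :: c₂ :: cs => by
    rw [splayLoop_cons_cons rfl, keys_splayLoop, rebuild_cons, rebuild_cons]
    exact keys_rebuild_congr (by cases c₁ <;> cases c₂ <;> simp [splayLoop, Ctx.plug, keys]) cs

end Zipper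

variable {α : Type} [LinearOrder α]

theorem mem_keys_insertKey {t : BT α} {y k : α} :
    k ∈ (t.insertKey y).keys ↔ k = y ∨ k ∈ t.keys := by
  induction t with
  | leaf => simp [insertKey, keys]
  | node l v r ihl ihr =>
    simp only [insertKey]
    split_ifs with h₁ h₂
    · simp only [keys, List.mem_append, List.mem_cons, ihl]; tauto
    · simp only [keys, List.mem_append, List.mem_cons, ihr]; tauto
    · obtain rfl : y = v := le_antisymm (not_lt.1 h₂) (not_lt.1 h₁)
      simp only [keys, List.mem_append, List.mem_cons]; tauto

theorem isBST_insertKey {t : BT α} (ht : t.IsBST) (y : α) : (t.insertKey y).IsBST := by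
  induction t with
  | leaf => simp [insertKey, IsBST, keys]
  | node l v r ihl ihr =>
    obtain ⟨hl, hr, hbl, hbr⟩ := ht
    simp only [insertKey]
    split_ifs with h₁ h₂
    · refine ⟨fun k hk => ?_, hr, ihl hbl, hbr⟩
      rcases mem_keys_insertKey.1 hk with rfl | hk
      exacts [h₁, hl k hk]
    · refine ⟨hl, fun k hk => ?_, hbl, ihr hbr⟩
      rcases mem_keys_insertKey.1 hk with rfl | hk
      exacts [h₂, hr k hk]
    · exact ⟨hl, hr, hbl, hbr⟩

theorem rootKey_insertKey {t : BT α} {x : α} (ht : t.rootKey = some x) (y : α) :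
    (t.insertKey y).rootKey = some x := by
  obtain ⟨a, b, rfl⟩ := eq_node_of_rootKey ht
  simp only [insertKey]
  split_ifs <;> rfl

theorem isBST_iff_pairwise_keys {t : BT α} : t.IsBST ↔ t.keys.Pairwise (· < ·) := by
  induction t with
  | leaf => simp [IsBST, keys]
  | node l v r ihl ihr =>
    simp only [IsBST, keys, List.pairwise_append, List.pairwise_cons, List.mem_cons,
      forall_eq_or_imp, ihl, ihr]
    constructor
    · rintro ⟨hl, hr, hbl, hbr⟩
      exact ⟨hbl, ⟨hr, hbr⟩, fun k hk => ⟨hl k hk, fun m hm => (hl k hk).trans (hr m hm)⟩⟩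
    · rintro ⟨hbl, ⟨hr, hbr⟩, hlr⟩
      exact ⟨fun k hk => (hlr k hk).1, hr, hbl, hbr⟩

theorem IsBST.of_keys_eq {t t' : BT α} (ht : t.IsBST) (h : t'.keys = t.keys) : t'.IsBST := by
  rw [isBST_iff_pairwise_keys, h]
  exact isBST_iff_pairwise_keys.1 ht

/-- `c.Toward k`: the key `k` lies on the same side of `c.key` as the hole of `c`. -/
def Ctx.Toward : Ctx α → α → Prop
  | .inL v _, k => k < v
  | .inR _ v, k => v < k

theorem IsBST.of_rebuild {t : BT α} {cs : List (Ctx α)} (h : (rebuild t cs).IsBST) :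
    t.IsBST ∧ ∀ c ∈ cs, ∀ k ∈ t.keys, c.Toward k := by
  induction cs generalizing t with
  | nil => exact ⟨h, by simp⟩
  | cons c cs ih =>
    rw [rebuild_cons] at h
    obtain ⟨hplug, hcs⟩ := ih h
    have hmem : ∀ k ∈ t.keys, k ∈ (c.plug t).keys := by
      intro k hk; cases c <;> simp [Ctx.plug, keys, hk]
    refine ⟨?_, ?_⟩
    · cases c <;> [exact hplug.2.2.1; exact hplug.2.2.2]
    · simp only [List.mem_cons, forall_eq_or_imp]
      refine ⟨?_, fun c' hc' k hk => hcs c' hc' k (hmem k hk)⟩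
      cases c <;> [exact hplug.1; exact hplug.2.1]

/-- Leaf insertion of `y` into `c.plug t`, seen from `c`: `none` if the search for `y` enters
the hole, otherwise the context after the insertion. -/
def Ctx.insertKey (y : α) : Ctx α → Option (Ctx α)
  | .inL v r => if y < v then none else some (.inL v (if v < y then r.insertKey y else r))
  | .inR l v => if v < y then none else some (.inR (if y < v then l.insertKey y else l) v)

theorem Ctx.insertKey_plug (t : BT α) (c : Ctx α) (y : α) :
    (c.plug t).insertKey y = (c.insertKey y).elim (c.plug (t.insertKey y)) (·.plug t) := by
  cases c <;> simp only [plug, insertKey, BT.insertKey] <;> split_ifs <;> first | rfl | order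

/-- Leaf insertion of `y` into `rebuild t cs`, seen from the spine `cs`: `none` if the search
for `y` enters `t`, otherwise the spine after the insertion. -/
def insertKeyCtxs (y : α) : List (Ctx α) → Option (List (Ctx α))
  | [] => none
  | c :: cs =>
    match insertKeyCtxs y cs with
    | some cs' => some (c :: cs')
    | none => (c.insertKey y).map (· :: cs)

theorem insertKey_rebuild (t : BT α) (cs : List (Ctx α)) (y : α) :
    (rebuild t cs).insertKey y =
      (insertKeyCtxs y cs).elim (rebuild (t.insertKey y) cs) (rebuild t) := by
  induction cs generalizing t with
  | nil => rfl
  | cons c cs ih =>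
    rw [rebuild_cons, ih, insertKeyCtxs]
    rcases insertKeyCtxs y cs with _ | cs'
    · rw [Ctx.insertKey_plug]
      rcases c.insertKey y with _ | c' <;> simp [rebuild_cons]
    · exact (rebuild_cons t c cs').symm

theorem length_of_insertKeyCtxs_eq_some {y : α} {cs cs' : List (Ctx α)}
    (h : insertKeyCtxs y cs = some cs') : cs'.length = cs.length := by
  induction cs generalizing cs' with
  | nil => cases h
  | cons c cs ih =>
    rw [insertKeyCtxs] at h
    rcases hcs : insertKeyCtxs y cs with _ | cs''
    · rw [hcs, Option.map_eq_some_iff] at h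
      obtain ⟨c', -, rfl⟩ := h
      rfl
    · rw [hcs, Option.some_inj] at h
      simp [← h, ih hcs]

theorem insertKey_splayLoop_singleton {a b : BT α} {x y : α} {c : Ctx α} (h : c.Toward x) :
    (splayLoop (node a x b) [c]).insertKey y =
      (insertKeyCtxs y [c]).elim (splayLoop ((node a x b).insertKey y) [c])
        (splayLoop (node a x b)) := by
  cases c <;> simp only [Ctx.Toward] at h <;>
    simp only [insertKeyCtxs, Ctx.insertKey, insertKey, splayLoop] <;>
    split_ifs <;> first | rfl | order

theorem insertKey_splayLoop_pair {a b : BT α} {x y : α} {c₁ c₂ : Ctx α}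
    (h₁ : c₁.Toward x) (h₂ : c₂.Toward x) (h₁₂ : c₂.Toward c₁.key) :
    (splayLoop (node a x b) [c₁, c₂]).insertKey y =
      (insertKeyCtxs y [c₁, c₂]).elim (splayLoop ((node a x b).insertKey y) [c₁, c₂])
        (splayLoop (node a x b)) := by
  cases c₁ <;> cases c₂ <;> simp only [Ctx.Toward, Ctx.key] at h₁ h₂ h₁₂ <;>
    simp only [insertKeyCtxs, Ctx.insertKey, insertKey, splayLoop] <;>
    split_ifs <;> first | rfl | order

theorem insertKey_splayLoop {x : α} (y : α) : ∀ {t : BT α} {cs : List (Ctx α)},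
    t.rootKey = some x → (rebuild t cs).IsBST →
      (splayLoop t cs).insertKey y =
        (insertKeyCtxs y cs).elim (splayLoop (t.insertKey y) cs) (splayLoop t)
  | t, [], _, _ => by simp [insertKeyCtxs, splayLoop_nil]
  | t, [c], ht, h => by
    obtain ⟨a, b, rfl⟩ := eq_node_of_rootKey ht
    exact insertKey_splayLoop_singleton (h.of_rebuild.2 c (by simp) x (by simp [keys]))
  | t, c₁ :: c₂ :: cs, ht, h => by
    have hx := mem_keys_of_rootKey ht
    have htow := h.of_rebuild.2
    have h₁₂ : c₂.Toward c₁.key := by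
      rw [rebuild_cons] at h
      exact h.of_rebuild.2 c₂ (by simp) _ (Ctx.key_mem_keys_plug t c₁)
    have hpair : (rebuild (splayLoop t [c₁, c₂]) cs).IsBST :=
      h.of_keys_eq ((keys_rebuild_congr (keys_splayLoop t [c₁, c₂]) cs).trans
        (by rw [← rebuild_append]; rfl))
    rw [splayLoop_cons_cons ht, insertKey_splayLoop y (rootKey_splayLoop_pair ht c₁ c₂) hpair]
    rcases h₀ : insertKeyCtxs y cs with _ | cs'
    · obtain ⟨a, b, rfl⟩ := eq_node_of_rootKey ht
      rw [Option.elim, insertKey_splayLoop_pair (htow c₁ (by simp) x hx)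
        (htow c₂ (by simp) x hx) h₁₂]
      rcases h₂ : c₂.insertKey y with _ | c₂' <;> rcases h₁ : c₁.insertKey y with _ | c₁' <;>
        simp only [insertKeyCtxs, h₀, h₁, h₂, Option.map, Option.elim]
      all_goals first
        | exact (splayLoop_cons_cons ht _ _ _).symm
        | exact (splayLoop_cons_cons (rootKey_insertKey ht y) _ _ _).symm
    · simp only [insertKeyCtxs, h₀, Option.elim]
      exact (splayLoop_cons_cons ht _ _ _).symm

theorem exists_rebuild_eq_of_mem {T : BT α} {x : α} (hT : T.IsBST) (hx : x ∈ T.keys) :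
    ∃ t cs, t.rootKey = some x ∧ rebuild t cs = T := by
  induction T with
  | leaf => simp [keys] at hx
  | node l v r ihl ihr =>
    obtain ⟨hl, hr, hbl, hbr⟩ := hT
    simp only [keys, List.mem_append, List.mem_cons] at hx
    rcases lt_trichotomy x v with hxv | rfl | hxv
    · obtain ⟨t, cs, ht, rfl⟩ := ihl hbl (hx.resolve_right (by grind))
      exact ⟨t, cs ++ [.inL v r], ht, by rw [rebuild_append]; rfl⟩
    · exact ⟨node l x r, [], rfl, rfl⟩
    · obtain ⟨t, cs, ht, rfl⟩ := ihr hbr (by grind)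
      exact ⟨t, cs ++ [.inR l v], ht, by rw [rebuild_append]; rfl⟩

theorem descend_rebuild {t : BT α} {x : α} {cs : List (Ctx α)} (hcs : ∀ c ∈ cs, c.Toward x)
    (acc : List (Ctx α)) : descend (rebuild t cs) x acc = descend t x (cs ++ acc) := by
  induction cs generalizing t with
  | nil => rfl
  | cons c cs ih =>
    rw [rebuild_cons, ih fun c' hc' => hcs c' (List.mem_cons_of_mem c hc')]
    have hc := hcs c List.mem_cons_self
    cases c <;> simp only [Ctx.Toward] at hc <;> simp [Ctx.plug, descend, hc, not_lt_of_gt hc]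

theorem splay_rebuild {t : BT α} {x : α} {cs : List (Ctx α)} (ht : t.rootKey = some x)
    (hcs : ∀ c ∈ cs, c.Toward x) : splay x (rebuild t cs) = splayLoop t cs := by
  obtain ⟨a, b, rfl⟩ := eq_node_of_rootKey ht
  simp [splay, descend_rebuild hcs, descend]

theorem depthOf_rebuild {t : BT α} {x : α} {cs : List (Ctx α)} (hcs : ∀ c ∈ cs, c.Toward x) :
    (rebuild t cs).depthOf x = t.depthOf x + cs.length := by
  induction cs generalizing t with
  | nil => rfl
  | cons c cs ih =>
    rw [rebuild_cons, ih fun c' hc' => hcs c' (List.mem_cons_of_mem c hc')]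
    have hc := hcs c List.mem_cons_self
    cases c <;> simp only [Ctx.Toward] at hc <;>
      simp [Ctx.plug, depthOf, hc, not_lt_of_gt hc] <;> omega

theorem isBST_splay {T : BT α} {x : α} (hT : T.IsBST) (hx : x ∈ T.keys) :
    (splay x T).IsBST := by
  obtain ⟨t, cs, ht, rfl⟩ := exists_rebuild_eq_of_mem hT hx
  rw [splay_rebuild ht fun c hc => hT.of_rebuild.2 c hc x (mem_keys_of_rootKey ht)]
  exact hT.of_keys_eq (keys_splayLoop t cs)

theorem splay_insertKey {T : BT α} {x : α} (hT : T.IsBST) (hx : x ∈ T.keys) (y : α) :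
    splay x (T.insertKey y) = (splay x T).insertKey y := by
  obtain ⟨t, cs, ht, rfl⟩ := exists_rebuild_eq_of_mem hT hx
  have hxt := mem_keys_of_rootKey ht
  have hins := isBST_insertKey hT y
  rw [splay_rebuild ht fun c hc => hT.of_rebuild.2 c hc x hxt, insertKey_splayLoop y ht hT]
  rw [insertKey_rebuild] at hins ⊢
  rcases h : insertKeyCtxs y cs with _ | cs'
  · exact splay_rebuild (rootKey_insertKey ht y) fun c hc => hT.of_rebuild.2 c hc x hxt
  · rw [h] at hins
    exact splay_rebuild ht fun c hc => hins.of_rebuild.2 c hc x hxt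

theorem depthOf_insertKey {T : BT α} {x : α} (hT : T.IsBST) (hx : x ∈ T.keys) (y : α) :
    (T.insertKey y).depthOf x = T.depthOf x := by
  obtain ⟨t, cs, ht, rfl⟩ := exists_rebuild_eq_of_mem hT hx
  have hxt := mem_keys_of_rootKey ht
  have hins := isBST_insertKey hT y
  have hcs := fun c hc => hT.of_rebuild.2 c hc x hxt
  rw [insertKey_rebuild] at hins ⊢
  rw [depthOf_rebuild hcs]
  rcases h : insertKeyCtxs y cs with _ | cs'
  · obtain ⟨a, b, rfl⟩ := eq_node_of_rootKey ht
    obtain ⟨a', b', he⟩ := eq_node_of_rootKey (rootKey_insertKey ht y)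
    simp [depthOf_rebuild hcs, he, depthOf]
  · rw [h] at hins
    rw [Option.elim, depthOf_rebuild fun c hc => hins.of_rebuild.2 c hc x hxt,
      length_of_insertKeyCtxs_eq_some h]

theorem splay_foldl_insertKey {T : BT α} {x : α} (hT : T.IsBST) (hx : x ∈ T.keys)
    (ys : List α) : splay x (ys.foldl insertKey T) = ys.foldl insertKey (splay x T) := by
  induction ys generalizing T with
  | nil => rfl
  | cons y ys ih =>
    rw [List.foldl_cons, List.foldl_cons, ← splay_insertKey hT hx y]
    exact ih (isBST_insertKey hT y) (mem_keys_insertKey.2 (Or.inr hx))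

theorem depthOf_foldl_insertKey {T : BT α} {x : α} (hT : T.IsBST) (hx : x ∈ T.keys)
    (ys : List α) : (ys.foldl insertKey T).depthOf x = T.depthOf x := by
  induction ys generalizing T with
  | nil => rfl
  | cons y ys ih =>
    rw [List.foldl_cons, ← depthOf_insertKey hT hx y]
    exact ih (isBST_insertKey hT y) (mem_keys_insertKey.2 (Or.inr hx))

end BT

theorem insertSplayCost_eq_splayCost_foldl {α : Type} [LinearOrder α] {T : BT α}
    (hT : T.IsBST) (π : List α) :
    insertSplayCost T π = splayCost (π.foldl BT.insertKey T) π := by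
  induction π generalizing T with
  | nil => rfl
  | cons x xs ih =>
    have hB := BT.isBST_insertKey hT x
    have hx : x ∈ (T.insertKey x).keys := BT.mem_keys_insertKey.2 (Or.inl rfl)
    rw [insertSplayCost, splayCost, List.foldl_cons, BT.depthOf_foldl_insertKey hB hx,
      BT.splay_foldl_insertKey hB hx, ih (BT.isBST_splay hB hx)]

theorem insertSplayCost_eq_splayCost_bstOf_general {α : Type} [LinearOrder α]
    (π : List α) :
    insertSplayCost BT.leaf π = splayCost (bstOf π) π :=
  insertSplayCost_eq_splayCost_foldl (T := BT.leaf) trivial π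

/-- Insertion splaying a sequence of distinct keys starting from the empty
tree costs exactly as much as splaying the same sequence starting from its
insertion tree `bstOf π`. -/
theorem insertSplayCost_eq_splayCost_bstOf {α : Type} [LinearOrder α]
    (π : List α) (hnd : π.Nodup) :
    insertSplayCost BT.leaf π = splayCost (bstOf π) π :=
  insertSplayCost_eq_splayCost_bstOf_general π
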